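/- In the setting of the perturbed system with the column spatially fixed (j = j(n) chosen so x_{j(n)} → x* ∈ (a,b) with u(x*) ≠ 0), the discretization error ‖u^h − u^n‖_∞ does not converge to 0 as h → 0; in fact it converges to |u(x*)|. -/

import Mathlib

/-!
Every entry of `J v` is `∑ v`, so `(J + δ E_{ij}) v = c 𝟙` says exactly `v_j = 0` and
`∑ v = c` (read off a row other than `i`, then row `i`). Moving mass between two coordinates
other than `j` preserves these constraints, so the least-squares solution `u^h` has one common
deviation from `u^n` off `j`, namely `(c - ∑ u^n + u^n_j) / m`. With `c = h⁻¹ ∫ u` and `u(b) = 0`,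
`c - ∑ u^n` is a right-endpoint quadrature error divided by `h`, which is `O(1)` for Lipschitz `u`.
Hence the error off `j` is `O(1/m)`, while at `j` it is `|u^n_j| → |u(x*)|`.
-/

open MeasureTheory intervalIntegral Matrix Filter
open scoped NNReal

theorem LipschitzOnWith.abs_integral_sub_mul_right_le {u : ℝ → ℝ} {K : ℝ≥0} {p q : ℝ}
    (hpq : p ≤ q) (hu : LipschitzOnWith K u (Set.Icc p q)) :
    |(∫ x in p..q, u x) - (q - p) * u q| ≤ K * (q - p) ^ 2 := by
  have hq : q ∈ Set.Icc p q := Set.right_mem_Icc.2 hpq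
  have hint : IntervalIntegrable u volume p q := hu.continuousOn.intervalIntegrable_of_Icc hpq
  have hbound : ∀ x ∈ Set.uIoc p q, ‖u x - u q‖ ≤ K * (q - p) := by
    intro x hx
    rw [Set.uIoc_of_le hpq] at hx
    have hx' : x ∈ Set.Icc p q := Set.Ioc_subset_Icc_self hx
    calc ‖u x - u q‖ = dist (u x) (u q) := rfl
      _ ≤ K * dist x q := hu.dist_le_mul x hx' q hq
      _ ≤ K * (q - p) := by
        gcongr
        rw [Real.dist_eq, abs_of_nonpos (by linarith [hx.2])]
        linarith [hx.1]
  calc |(∫ x in p..q, u x) - (q - p) * u q| = ‖∫ x in p..q, (u x - u q)‖ := by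
        rw [integral_sub hint intervalIntegrable_const, intervalIntegral.integral_const,
          smul_eq_mul]
        rfl
    _ ≤ K * (q - p) * |q - p| := norm_integral_le_of_norm_le_const hbound
    _ = K * (q - p) ^ 2 := by rw [abs_of_nonneg (sub_nonneg.2 hpq)]; ring

theorem LipschitzOnWith.abs_integral_sub_rightRiemannSum_le {u : ℝ → ℝ} {K : ℝ≥0} {a h : ℝ}
    (hh : 0 ≤ h) (n : ℕ) (hu : LipschitzOnWith K u (Set.Icc a (a + n * h))) :
    |(∫ x in a..a + n * h, u x) - ∑ k ∈ Finset.range n, h * u (a + (k + 1) * h)|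
      ≤ K * n * h ^ 2 := by
  induction n with
  | zero => simp
  | succ n ih =>
    have hmid : a + n * h ≤ a + (n + 1 : ℕ) * h := by push_cast; nlinarith
    have hleft : a ≤ a + n * h := by nlinarith [n.cast_nonneg (α := ℝ)]
    have hu₁ := hu.mono (Set.Icc_subset_Icc_right hmid)
    have hu₂ := hu.mono (Set.Icc_subset_Icc_left hleft)
    have hcell := hu₂.abs_integral_sub_mul_right_le hmid
    rw [← integral_add_adjacent_intervals (hu₁.continuousOn.intervalIntegrable_of_Icc hleft)
      (hu₂.continuousOn.intervalIntegrable_of_Icc hmid), Finset.sum_range_succ]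
    have hstep : a + (n + 1 : ℕ) * h - (a + n * h) = h := by push_cast; ring
    rw [hstep] at hcell
    push_cast at hcell ⊢
    calc _ = |((∫ x in a..a + n * h, u x) - ∑ k ∈ Finset.range n, h * u (a + (k + 1) * h))
            + ((∫ x in a + n * h..a + (n + 1) * h, u x) - h * u (a + (n + 1) * h))| := by
          ring_nf
      _ ≤ K * n * h ^ 2 + K * h ^ 2 := (abs_add_le _ _).trans (add_le_add (ih hu₁) hcell)
      _ = K * (n + 1) * h ^ 2 := by ring

section PerturbedOnes

variable {ι : Type*} [Fintype ι] [DecidableEq ι]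

theorem ones_add_single_mulVec {R : Type*} [CommRing R] (i j : ι) (δ : R) (v : ι → R) :
    (of (fun _ _ => 1) + single i j δ) *ᵥ v = (fun _ => ∑ l, v l) + Pi.single i (δ * v j) := by
  ext k
  rw [add_mulVec, single_mulVec_eq]
  simp [mulVec, dotProduct, Pi.single_apply]

theorem ones_add_single_mulVec_eq_const_iff {R : Type*} [CommRing R] [NoZeroDivisors R]
    [Nontrivial ι] {i j : ι} {δ : R} (hδ : δ ≠ 0) {v : ι → R} {c : R} :
    (of (fun _ _ => 1) + single i j δ) *ᵥ v = (fun _ => c) ↔ v j = 0 ∧ ∑ l, v l = c := by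
  obtain ⟨k, hk⟩ := exists_ne i
  simp only [ones_add_single_mulVec, funext_iff, Pi.add_apply]
  constructor
  · intro hv
    have hsum : ∑ l, v l = c := by simpa [Pi.single_apply, hk] using hv k
    refine ⟨?_, hsum⟩
    simpa [hsum, hδ] using hv i
  · rintro ⟨hvj, hsum⟩ l
    simp [hvj, hsum]

theorem sum_sq_add_transfer {k l : ι} (hkl : k ≠ l) (f : ι → ℝ) (t : ℝ) :
    ∑ p, (f p + t * (Pi.single l 1 - Pi.single k 1 : ι → ℝ) p) ^ 2
      = ∑ p, f p ^ 2 + 2 * t * (f l - f k) + 2 * t ^ 2 := by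
  have hexp : ∀ p, (f p + t * (Pi.single l 1 - Pi.single k 1 : ι → ℝ) p) ^ 2
      = f p ^ 2 + 2 * t * ((Pi.single l 1 : ι → ℝ) p * f p - (Pi.single k 1 : ι → ℝ) p * f p)
        + t ^ 2 * ((Pi.single l 1 : ι → ℝ) p + (Pi.single k 1 : ι → ℝ) p) := by
    intro p
    rcases eq_or_ne p l with rfl | hpl
    · simp [hkl.symm]; ring
    rcases eq_or_ne p k with rfl | hpk
    · simp [hpl]; ring
    · simp [hpl, hpk]
  simp only [hexp, Finset.sum_add_distrib, ← Finset.mul_sum, Finset.sum_sub_distrib,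
    Pi.single_apply, ite_mul, one_mul, zero_mul, Finset.sum_ite_eq', Finset.mem_univ, if_true]
  ring

theorem sub_eq_sub_of_forall_sum_sq_le {j : ι} {c : ℝ} {w y : ι → ℝ}
    (hw : w j = 0 ∧ ∑ l, w l = c)
    (hmin : ∀ v : ι → ℝ, v j = 0 ∧ ∑ l, v l = c → ∑ k, (w k - y k) ^ 2 ≤ ∑ k, (v k - y k) ^ 2)
    {k l : ι} (hkj : k ≠ j) (hlj : l ≠ j) : w k - y k = w l - y l := by
  rcases eq_or_ne k l with rfl | hkl
  · rfl
  -- moving half the gap between the deviations from `k` to `l` keeps the constraints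
  -- and lowers the squared distance by half the squared gap
  set t := ((w k - y k) - (w l - y l)) / 2
  let v : ι → ℝ := fun p => w p + t * (Pi.single l 1 - Pi.single k 1 : ι → ℝ) p
  have hv : v j = 0 ∧ ∑ p, v p = c := by
    refine ⟨by simp [v, hw.1, hkj.symm, hlj.symm], ?_⟩
    simp [v, Finset.sum_add_distrib, ← Finset.mul_sum, Finset.sum_sub_distrib, hw.2]
  have hwv := hmin v hv
  have hv' : ∀ p, v p - y p = (w p - y p) + t * (Pi.single l 1 - Pi.single k 1 : ι → ℝ) p := by
    intro p; simp only [v]; ring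
  simp only [hv', sum_sq_add_transfer hkl, t] at hwv
  have hsq : ((w k - y k) - (w l - y l)) ^ 2 = 0 :=
    le_antisymm (by nlinarith) (sq_nonneg _)
  exact sub_eq_zero.1 (pow_eq_zero_iff two_ne_zero |>.1 hsq)

theorem card_sub_one_mul_sub_eq_of_sub_eq_sub {j : ι} {c : ℝ} {w y : ι → ℝ}
    (hw : w j = 0 ∧ ∑ l, w l = c)
    (heq : ∀ k l, k ≠ j → l ≠ j → w k - y k = w l - y l) {k : ι} (hkj : k ≠ j) :
    ((Fintype.card ι : ℝ) - 1) * (w k - y k) = c - ∑ l, y l + y j := by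
  have hsum : ∑ l ∈ Finset.univ.erase j, (w l - y l) = c - ∑ l, y l + y j := by
    rw [Finset.sum_erase_eq_sub (Finset.mem_univ j), Finset.sum_sub_distrib, hw.1, hw.2]
    ring
  rw [← hsum, Finset.sum_congr rfl fun l hl => heq l k (Finset.ne_of_mem_erase hl) hkj,
    Finset.sum_const, Finset.card_erase_of_mem (Finset.mem_univ j), Finset.card_univ,
    nsmul_eq_mul, Nat.cast_sub (Fintype.card_pos_iff.2 ⟨j⟩), Nat.cast_one]

theorem closest_solution_ones_add_single [Nontrivial ι] {i j : ι} {δ c : ℝ} (hδ : δ ≠ 0)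
    {w y : ι → ℝ} (hw : (of (fun _ _ => 1) + single i j δ) *ᵥ w = fun _ => c)
    (hmin : ∀ v : ι → ℝ, (of (fun _ _ => 1) + single i j δ) *ᵥ v = (fun _ => c) →
      ∑ k, (w k - y k) ^ 2 ≤ ∑ k, (v k - y k) ^ 2) :
    w j = 0 ∧ ∀ k ≠ j, ((Fintype.card ι : ℝ) - 1) * (w k - y k) = c - ∑ l, y l + y j := by
  rw [ones_add_single_mulVec_eq_const_iff hδ] at hw
  simp only [ones_add_single_mulVec_eq_const_iff hδ] at hmin
  exact ⟨hw.1, fun k hkj => card_sub_one_mul_sub_eq_of_sub_eq_sub hw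
    (fun k l hkj hlj => sub_eq_sub_of_forall_sum_sq_le hw hmin hkj hlj) hkj⟩

end PerturbedOnes

theorem tendsto_ciSup_of_tendsto_apply_of_forall_ne_le {α : Type*} {l : Filter α}
    {ι : α → Type*} [∀ m, Finite (ι m)] {f : ∀ m, ι m → ℝ} {j : ∀ m, ι m} {ε : α → ℝ}
    {L : ℝ} (hL : 0 ≤ L) (hj : Tendsto (fun m => f m (j m)) l (nhds L))
    (hε : Tendsto ε l (nhds 0)) (hle : ∀ᶠ m in l, ∀ k ≠ j m, f m k ≤ ε m) :
    Tendsto (fun m => ⨆ k, f m k) l (nhds L) := by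
  have hmax : Tendsto (fun m => max (f m (j m)) (ε m)) l (nhds L) := by
    simpa [max_eq_left hL] using hj.max hε
  refine tendsto_of_tendsto_of_tendsto_of_le_of_le' hj hmax
    (Eventually.of_forall fun m => le_ciSup (Set.finite_range _).bddAbove (j m)) ?_
  filter_upwards [hle] with m hm
  have : Nonempty (ι m) := ⟨j m⟩
  refine ciSup_le fun k => ?_
  rcases eq_or_ne k (j m) with rfl | hk
  · exact le_max_left _ _
  · exact (hm k hk).trans (le_max_right _ _)

theorem uniform_node_mem_Icc {a b : ℝ} (hab : a < b) (m : ℕ) (k : Fin (m + 1)) :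
    a + ((k : ℕ) + 1) * ((b - a) / (m + 2)) ∈ Set.Icc a b := by
  have hend : ((m : ℝ) + 2) * ((b - a) / (m + 2)) = b - a := by field_simp
  have hk : ((k : ℕ) : ℝ) + 1 ≤ m + 2 := by
    have : ((k : ℕ) : ℝ) + 1 ≤ m + 1 := by exact_mod_cast k.is_lt
    linarith
  have hpos : 0 < (b - a) / (m + 2) := div_pos (sub_pos.2 hab) (by positivity)
  constructor <;> nlinarith [(k : ℕ).cast_nonneg (α := ℝ)]

theorem LipschitzOnWith.abs_inv_step_mul_integral_sub_sum_le {u : ℝ → ℝ} {K : ℝ≥0} {a b : ℝ}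
    (hab : a < b) (hu : LipschitzOnWith K u (Set.Icc a b)) (hub : u b = 0) (m : ℕ) :
    |1 / ((b - a) / (m + 2)) * (∫ x in a..b, u x)
      - ∑ k : Fin (m + 1), u (a + ((k : ℕ) + 1) * ((b - a) / (m + 2)))| ≤ K * (b - a) := by
  set h := (b - a) / (m + 2) with hh
  have hpos : 0 < h := div_pos (sub_pos.2 hab) (by positivity)
  have hend : a + ((m + 2 : ℕ) : ℝ) * h = b := by rw [hh]; push_cast; field_simp; ring
  have hriemann := (hend ▸ hu).abs_integral_sub_rightRiemannSum_le hpos.le (m + 2)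
  rw [hend, Finset.sum_range_succ, ← Fin.sum_univ_eq_sum_range, ← Finset.mul_sum] at hriemann
  have hlast : a + ((m + 1 : ℕ) + 1) * h = b := by rw [← hend]; push_cast; ring
  rw [hlast, hub, mul_zero, add_zero] at hriemann
  calc _ = |(∫ x in a..b, u x) - h * ∑ k : Fin (m + 1), u (a + ((k : ℕ) + 1) * h)| / h := by
        rw [eq_div_iff hpos.ne', ← abs_of_pos hpos, ← abs_mul, abs_of_pos hpos]
        congr 1; field_simp
    _ ≤ K * ((m + 2 : ℕ) : ℝ) * h ^ 2 / h := by gcongr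
    _ = K * (b - a) := by rw [← hend]; field_simp; ring

theorem perturbed_spatially_fixed_error_limit_general (a b xs : ℝ) (hab : a < b)
    (hxs : xs ∈ Set.Ioo a b) (u : ℝ → ℝ)
    (hu : ContDiffOn ℝ 2 u (Set.Icc a b))
    (hub : u b = 0)
    (δ : ℝ) (hδ : δ ≠ 0)
    (h : ℕ → ℝ) (hh : ∀ m, h m = (b - a) / (m + 2))
    (idx jdx : ∀ m : ℕ, Fin (m + 1))
    (hjdx : Tendsto (fun m => a + ((jdx m : ℕ) + 1) * h m) atTop (nhds xs))
    (J A : ∀ m : ℕ, Matrix (Fin (m + 1)) (Fin (m + 1)) ℝ)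
    (hJ : ∀ m k l, J m k l = 1)
    (hA : ∀ m, A m = J m + Matrix.single (idx m) (jdx m) δ)
    (un uh : ∀ m : ℕ, Fin (m + 1) → ℝ)
    (hun : ∀ m k, un m k = u (a + ((k : ℕ) + 1) * h m))
    (huh : ∀ m, (A m).mulVec (uh m) = fun _ => (1 / h m) * ∫ x in a..b, u x)
    (hclosest : ∀ m, ∀ v : Fin (m + 1) → ℝ,
      ((A m).mulVec v = fun _ => (1 / h m) * ∫ x in a..b, u x) →
      ∑ k, (uh m k - un m k) ^ 2 ≤ ∑ k, (v k - un m k) ^ 2) :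
    Tendsto (fun m => ⨆ k : Fin (m + 1), |uh m k - un m k|) atTop
      (nhds |u xs|) := by
  obtain ⟨K, hK⟩ := hu.exists_lipschitzOnWith two_ne_zero (convex_Icc a b) isCompact_Icc
  have hsol : ∀ m ≥ 1, uh m (jdx m) = 0 ∧ ∀ k ≠ jdx m, (m : ℝ) * (uh m k - un m k)
      = (1 / h m) * (∫ x in a..b, u x) - ∑ l, un m l + un m (jdx m) := by
    intro m hm
    have : Nontrivial (Fin (m + 1)) := Fin.nontrivial_iff_two_le.2 (by omega)
    have hA' : A m = of (fun _ _ => 1) + single (idx m) (jdx m) δ := by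
      rw [hA]; congr; ext; simp [hJ]
    have := closest_solution_ones_add_single (y := un m) hδ (hA' ▸ huh m) (hA' ▸ hclosest m)
    rw [Fintype.card_fin] at this
    simpa using this
  have hunj : Tendsto (fun m => un m (jdx m)) atTop (nhds (u xs)) := by
    have hxs' : xs ∈ Set.Icc a b := Set.Ioo_subset_Icc_self hxs
    have hnodes : ∀ᶠ m in atTop, a + ((jdx m : ℕ) + 1) * h m ∈ Set.Icc a b :=
      .of_forall fun m => hh m ▸ uniform_node_mem_Icc hab m (jdx m)
    simpa only [hun, Function.comp_def] using
      (hK.continuousOn xs hxs').tendsto.comp (tendsto_nhdsWithin_iff.2 ⟨hjdx, hnodes⟩)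
  refine tendsto_ciSup_of_tendsto_apply_of_forall_ne_le (abs_nonneg _)
    (j := jdx) (hunj.abs.congr' ?_) (ε := fun m => (K * (b - a) + |un m (jdx m)|) / m)
    ((tendsto_const_nhds.add hunj.abs).div_atTop tendsto_natCast_atTop_atTop) ?_
  · filter_upwards [eventually_ge_atTop 1] with m hm
    rw [(hsol m hm).1, zero_sub, abs_neg]
  · filter_upwards [eventually_ge_atTop 1] with m hm k hk
    have hm' : (0 : ℝ) < m := by exact_mod_cast hm
    rw [le_div_iff₀ hm', mul_comm, ← abs_of_pos hm', ← abs_mul, (hsol m hm).2 k hk]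
    refine (abs_add_le _ _).trans (add_le_add_left ?_ _)
    simpa only [hh, hun] using hK.abs_inv_step_mul_integral_sub_sum_le hab hub m

/-- Perturbed system with spatially fixed column (x_{j(n)} → x* with
u(x*) ≠ 0): the discretization error ‖u^h − u^n‖_∞ does not converge to 0;
it converges to |u(x*)|. (Here m+1 interior nodes, N = m+2 subintervals.) -/
theorem perturbed_spatially_fixed_error_limit (a b xs : ℝ) (hab : a < b)
    (hxs : xs ∈ Set.Ioo a b) (u : ℝ → ℝ) (M : ℝ)
    (hu : ContDiffOn ℝ 2 u (Set.Icc a b))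
    (hM : ∀ x ∈ Set.Icc a b, |iteratedDerivWithin 2 u (Set.Icc a b) x| ≤ M)
    (hua : u a = 0) (hub : u b = 0) (huxs : u xs ≠ 0)
    (δ : ℝ) (hδ : δ ≠ 0)
    (h : ℕ → ℝ) (hh : ∀ m, h m = (b - a) / (m + 2))
    (idx jdx : ∀ m : ℕ, Fin (m + 1))
    (hjdx : Tendsto (fun m => a + ((jdx m : ℕ) + 1) * h m) atTop (nhds xs))
    (J A : ∀ m : ℕ, Matrix (Fin (m + 1)) (Fin (m + 1)) ℝ)
    (hJ : ∀ m k l, J m k l = 1)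
    (hA : ∀ m, A m = J m + Matrix.single (idx m) (jdx m) δ)
    (un uh : ∀ m : ℕ, Fin (m + 1) → ℝ)
    (hun : ∀ m k, un m k = u (a + ((k : ℕ) + 1) * h m))
    (huh : ∀ m, (A m).mulVec (uh m) = fun _ => (1 / h m) * ∫ x in a..b, u x)
    (hclosest : ∀ m, ∀ v : Fin (m + 1) → ℝ,
      ((A m).mulVec v = fun _ => (1 / h m) * ∫ x in a..b, u x) →
      ∑ k, (uh m k - un m k) ^ 2 ≤ ∑ k, (v k - un m k) ^ 2) :
    Tendsto (fun m => ⨆ k : Fin (m + 1), |uh m k - un m k|) atTop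
      (nhds |u xs|) :=
  perturbed_spatially_fixed_error_limit_general a b xs hab hxs u hu hub δ hδ h hh idx jdx hjdx J A
    hJ hA un uh hun huh hclosest
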